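/- arXiv:2004.11241 — 5 statements merged into one kernel-verified Lean document; each statement's English description precedes it below -/
import Mathlib

section
/- Let θ₁, θ₂, θ₁₂ > 0 and let T₁, T₂, U be independent random variables on a probability space, where P(Tᵢ > t) = exp(−θᵢ t) for all t ≥ 0 (i = 1, 2) and U is uniformly distributed on (0,1). With Q(u) = −ln(1−u)/θ₁₂, R = min(T₁, Q(U)) and S = min(T₂, Q(1−U)), for all r, s ≥ 0 one has P(R > r, S > s) = exp(−θ₁ r − θ₂ s) · max(exp(−θ₁₂ r) + exp(−θ₁₂ s) − 1, 0). -/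
open MeasureTheory ProbabilityTheory Real

/-! The event `{R > r, S > s}` splits as `{T₁ > r} ∩ {T₂ > s} ∩ {Q(U) > r, Q(1 - U) > s}`, whose
three pieces are independent. Since `Q` is increasing, the last one is `{1 - e^{-θ₁₂ r} < U < e^{-θ₁₂ s}}`,
of probability `(e^{-θ₁₂ r} + e^{-θ₁₂ s} - 1)⁺`. -/

lemma ProbabilityTheory.iIndepFun.measure_preimage_inter_three {Ω β : Type*}
    {mΩ : MeasurableSpace Ω} {μ : Measure Ω} [MeasurableSpace β] {X Y Z : Ω → β}
    (h : iIndepFun ![X, Y, Z] μ) {A B C : Set β}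
    (hA : MeasurableSet A) (hB : MeasurableSet B) (hC : MeasurableSet C) :
    μ (X ⁻¹' A ∩ Y ⁻¹' B ∩ Z ⁻¹' C) = μ (X ⁻¹' A) * μ (Y ⁻¹' B) * μ (Z ⁻¹' C) := by
  have hsets : ∀ i ∈ Finset.univ, MeasurableSet (![A, B, C] i) := by
    intro i _
    fin_cases i <;> assumption
  have hinter : ⋂ i ∈ Finset.univ, ![X, Y, Z] i ⁻¹' ![A, B, C] i =
      X ⁻¹' A ∩ Y ⁻¹' B ∩ Z ⁻¹' C := by
    ext ω
    simp [Fin.forall_fin_succ, and_assoc]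
  rw [← hinter, h.measure_inter_preimage_eq_mul Finset.univ hsets, Fin.prod_univ_three]
  rfl

lemma Real.lt_neg_log_div_iff {θ t x : ℝ} (hθ : 0 < θ) (hx : 0 < x) :
    t < -log x / θ ↔ x < exp (-θ * t) := by
  rw [lt_div_iff₀ hθ, ← log_lt_iff_lt_exp hx]
  constructor <;> intro h <;> linarith

lemma setOf_lt_neg_log_div_inter_Ioo {θ r s : ℝ} (hθ : 0 < θ) (hr : 0 ≤ r) (hs : 0 ≤ s) :
    {u | r < -log (1 - u) / θ ∧ s < -log (1 - (1 - u)) / θ} ∩ Set.Ioo 0 1 =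
      Set.Ioo (1 - exp (-θ * r)) (exp (-θ * s)) := by
  ext u
  simp only [Set.mem_inter_iff, Set.mem_ofPred_eq, Set.mem_Ioo, sub_sub_cancel]
  constructor
  · rintro ⟨⟨hru, hsu⟩, hu0, hu1⟩
    rw [lt_neg_log_div_iff hθ (sub_pos.2 hu1)] at hru
    rw [lt_neg_log_div_iff hθ hu0] at hsu
    exact ⟨by linarith, hsu⟩
  · rintro ⟨hu0, hu1⟩
    have hr1 : exp (-θ * r) ≤ 1 := exp_le_one_iff.2 (by nlinarith)
    have hs1 : exp (-θ * s) ≤ 1 := exp_le_one_iff.2 (by nlinarith)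
    have hu0' : 0 < u := by linarith
    have hu1' : u < 1 := by linarith
    rw [lt_neg_log_div_iff hθ (sub_pos.2 hu1'), lt_neg_log_div_iff hθ hu0']
    exact ⟨⟨by linarith, hu1⟩, hu0', hu1'⟩

lemma volume_setOf_lt_neg_log_div_inter_Ioo {θ r s : ℝ} (hθ : 0 < θ) (hr : 0 ≤ r) (hs : 0 ≤ s) :
    volume ({u | r < -log (1 - u) / θ ∧ s < -log (1 - (1 - u)) / θ} ∩ Set.Ioo 0 1) =
      ENNReal.ofReal (exp (-θ * r) + exp (-θ * s) - 1) := by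
  rw [setOf_lt_neg_log_div_inter_Ioo hθ hr hs, volume_Ioo]
  congr 1
  ring

theorem bnmo_survival_general
    {Ω : Type*} [MeasureSpace Ω] [IsProbabilityMeasure (ℙ : Measure Ω)]
    (θ1 θ2 θ12 : ℝ) (hθ12 : 0 < θ12)
    (T1 T2 U : Ω → ℝ)
    (hUm : Measurable U)
    (hindep : iIndepFun ![T1, T2, U] ℙ)
    (hT1 : ∀ t : ℝ, 0 ≤ t → ℙ {ω | T1 ω > t} = ENNReal.ofReal (exp (-θ1 * t)))
    (hT2 : ∀ t : ℝ, 0 ≤ t → ℙ {ω | T2 ω > t} = ENNReal.ofReal (exp (-θ2 * t)))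
    (hU : Measure.map U ℙ = volume.restrict (Set.Ioo (0 : ℝ) 1))
    (Q : ℝ → ℝ) (hQ : ∀ u : ℝ, Q u = -Real.log (1 - u) / θ12)
    (R S : Ω → ℝ)
    (hR : ∀ ω, R ω = min (T1 ω) (Q (U ω)))
    (hS : ∀ ω, S ω = min (T2 ω) (Q (1 - U ω))) :
    ∀ r s : ℝ, 0 ≤ r → 0 ≤ s →
      ℙ {ω | R ω > r ∧ S ω > s} =
        ENNReal.ofReal (exp (-θ1 * r - θ2 * s) *
          max (exp (-θ12 * r) + exp (-θ12 * s) - 1) 0) := by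
  intro r s hr hs
  obtain rfl : Q = fun u => -log (1 - u) / θ12 := funext hQ
  set B := {u | r < -log (1 - u) / θ12 ∧ s < -log (1 - (1 - u)) / θ12}
  have hB : MeasurableSet B := by measurability
  have hevent : {ω | R ω > r ∧ S ω > s} = T1 ⁻¹' Set.Ioi r ∩ T2 ⁻¹' Set.Ioi s ∩ U ⁻¹' B := by
    ext ω
    simp only [Set.mem_ofPred_eq, Set.mem_inter_iff, Set.mem_preimage, Set.mem_Ioi, hR, hS,
      gt_iff_lt, lt_min_iff, B]
    tauto
  have hUB : ℙ (U ⁻¹' B) = ENNReal.ofReal (exp (-θ12 * r) + exp (-θ12 * s) - 1) := by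
    rw [← Measure.map_apply hUm hB, hU, Measure.restrict_apply hB,
      volume_setOf_lt_neg_log_div_inter_Ioo hθ12 hr hs]
  have hT1r : ℙ (T1 ⁻¹' Set.Ioi r) = ENNReal.ofReal (exp (-θ1 * r)) := hT1 r hr
  have hT2s : ℙ (T2 ⁻¹' Set.Ioi s) = ENNReal.ofReal (exp (-θ2 * s)) := hT2 s hs
  have hexp : exp (-θ1 * r - θ2 * s) = exp (-θ1 * r) * exp (-θ2 * s) := by
    rw [← exp_add]
    ring_nf
  rw [hevent, hindep.measure_preimage_inter_three measurableSet_Ioi measurableSet_Ioi hB, hT1r, hT2s,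
    hUB, ENNReal.ofReal_mul (by positivity), ENNReal.ofReal_max, ENNReal.ofReal_zero,
    max_eq_left zero_le, hexp, ENNReal.ofReal_mul (exp_nonneg _)]

/-- The joint survival function of the bivariate negative Marshall–Olkin model
`(R,S) = (min(T₁,Q(U)), min(T₂,Q(1−U)))` equals
`exp(−θ₁r−θ₂s)·max(exp(−θ₁₂r)+exp(−θ₁₂s)−1, 0)`. -/
theorem bnmo_survival
    {Ω : Type*} [MeasureSpace Ω] [IsProbabilityMeasure (ℙ : Measure Ω)]
    (θ1 θ2 θ12 : ℝ) (hθ1 : 0 < θ1) (hθ2 : 0 < θ2) (hθ12 : 0 < θ12)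
    (T1 T2 U : Ω → ℝ)
    (hT1m : Measurable T1) (hT2m : Measurable T2) (hUm : Measurable U)
    (hindep : iIndepFun ![T1, T2, U] ℙ)
    (hT1 : ∀ t : ℝ, 0 ≤ t → ℙ {ω | T1 ω > t} = ENNReal.ofReal (exp (-θ1 * t)))
    (hT2 : ∀ t : ℝ, 0 ≤ t → ℙ {ω | T2 ω > t} = ENNReal.ofReal (exp (-θ2 * t)))
    (hU : Measure.map U ℙ = volume.restrict (Set.Ioo (0 : ℝ) 1))
    (Q : ℝ → ℝ) (hQ : ∀ u : ℝ, Q u = -Real.log (1 - u) / θ12)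
    (R S : Ω → ℝ)
    (hR : ∀ ω, R ω = min (T1 ω) (Q (U ω)))
    (hS : ∀ ω, S ω = min (T2 ω) (Q (1 - U ω))) :
    ∀ r s : ℝ, 0 ≤ r → 0 ≤ s →
      ℙ {ω | R ω > r ∧ S ω > s} =
        ENNReal.ofReal (exp (-θ1 * r - θ2 * s) *
          max (exp (-θ12 * r) + exp (-θ12 * s) - 1) 0) :=
  bnmo_survival_general θ1 θ2 θ12 hθ12 T1 T2 U hUm hindep hT1 hT2 hU Q hQ R S hR hS
end

section
/- Let θ₁₂ > 0 and Q(u) = −ln(1−u)/θ₁₂. For all real t₁, t₂ ≥ 0 and all u ∈ (0,1), setting r = min(t₁, Q(u)) and s = min(t₂, Q(1−u)), one has exp(−θ₁₂ r) + exp(−θ₁₂ s) = 1 if and only if t₁ ≥ Q(u) and t₂ ≥ Q(1−u); moreover exp(−θ₁₂ r) + exp(−θ₁₂ s) ≥ 1 always holds. -/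
open Real

/-- Deterministic identification of the singular set of the BNMO construction:
with `r = min(t₁,Q(u))`, `s = min(t₂,Q(1−u))`, we have
`exp(−θ₁₂r)+exp(−θ₁₂s) = 1 ↔ t₁ ≥ Q(u) ∧ t₂ ≥ Q(1−u)`, and
`exp(−θ₁₂r)+exp(−θ₁₂s) ≥ 1` always. -/
theorem bnmo_singular_set
    (θ12 : ℝ) (hθ12 : 0 < θ12)
    (Q : ℝ → ℝ) (hQ : ∀ u : ℝ, Q u = -Real.log (1 - u) / θ12) :
    ∀ t1 t2 : ℝ, 0 ≤ t1 → 0 ≤ t2 → ∀ u ∈ Set.Ioo (0 : ℝ) 1,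
      (exp (-θ12 * min t1 (Q u)) + exp (-θ12 * min t2 (Q (1 - u))) = 1 ↔
        t1 ≥ Q u ∧ t2 ≥ Q (1 - u)) ∧
      exp (-θ12 * min t1 (Q u)) + exp (-θ12 * min t2 (Q (1 - u))) ≥ 1 := by
  intro t1 t2 ht1 ht2 u hu
  obtain ⟨hu0, hu1⟩ := hu
  have key : ∀ v : ℝ, 0 < v → v < 1 → exp (-θ12 * Q v) = 1 - v := by
    intro v hv0 hv1
    have h1v : 0 < 1 - v := by linarith
    rw [hQ v]
    have : -θ12 * (-Real.log (1 - v) / θ12) = Real.log (1 - v) := by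
      field_simp
    rw [this, Real.exp_log h1v]
  have h1 : exp (-θ12 * Q u) = 1 - u := key u hu0 hu1
  have h2 : exp (-θ12 * Q (1 - u)) = u := by
    have := key (1 - u) (by linarith) (by linarith)
    simpa using this
  -- monotonicity: exp(-θ min t Q) ≥ exp(-θ Q)
  have ha : exp (-θ12 * min t1 (Q u)) ≥ 1 - u := by
    have hle : -θ12 * Q u ≤ -θ12 * min t1 (Q u) := by
      have := min_le_right t1 (Q u); nlinarith
    have := Real.exp_le_exp.mpr hle
    linarith
  have hb : exp (-θ12 * min t2 (Q (1 - u))) ≥ u := by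
    have hle : -θ12 * Q (1 - u) ≤ -θ12 * min t2 (Q (1 - u)) := by
      have := min_le_right t2 (Q (1 - u)); nlinarith
    have := Real.exp_le_exp.mpr hle
    linarith
  refine ⟨⟨fun h => ?_, fun ⟨hg1, hg2⟩ => ?_⟩, by linarith⟩
  · have ea : exp (-θ12 * min t1 (Q u)) = 1 - u := by linarith
    have eb : exp (-θ12 * min t2 (Q (1 - u))) = u := by linarith
    constructor
    · have he : -θ12 * min t1 (Q u) = -θ12 * Q u :=
        Real.exp_injective (by rw [ea, h1])
      have hm : min t1 (Q u) = Q u :=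
        mul_left_cancel₀ (by linarith : (-θ12 : ℝ) ≠ 0) he
      exact min_eq_right_iff.mp hm
    · have he : -θ12 * min t2 (Q (1 - u)) = -θ12 * Q (1 - u) :=
        Real.exp_injective (by rw [eb, h2])
      have hm : min t2 (Q (1 - u)) = Q (1 - u) :=
        mul_left_cancel₀ (by linarith : (-θ12 : ℝ) ≠ 0) he
      exact min_eq_right_iff.mp hm
  · rw [min_eq_right hg1, min_eq_right hg2, h1, h2]; ring
end

section
/- Let θ₁, θ₂, θ₁₂ > 0 and let T₁, T₂, U be independent random variables on a probability space, where P(Tᵢ > t) = exp(−θᵢ t) for all t ≥ 0 (i = 1, 2) and U is uniformly distributed on (0,1). With Q(u) = −ln(1−u)/θ₁₂, R = min(T₁, Q(U)) and S = min(T₂, Q(1−U)), the probability of the singular set is P(exp(−θ₁₂ R) + exp(−θ₁₂ S) = 1) = ∫₀¹ u^{θ₁/θ₁₂} (1−u)^{θ₂/θ₁₂} du, i.e. it equals the Beta function value B(θ₁/θ₁₂ + 1, θ₂/θ₁₂ + 1). -/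
/-!
On the almost sure event `U ∈ (0,1)` we have `exp (-θ₁₂ Q(U)) = 1 - U` and `exp (-θ₁₂ Q(1-U)) = U`,
so `exp (-θ₁₂ R) = max (exp (-θ₁₂ T₁)) (1 - U)` and `exp (-θ₁₂ S) = max (exp (-θ₁₂ T₂)) U`.
These sum to `1` exactly when both maxima are attained by the `U`-terms, i.e. when
`Q(U) ≤ T₁` and `Q(1-U) ≤ T₂`. Given `U = u`, independence makes this event have probability
`e^{-θ₁ Q(u)} e^{-θ₂ Q(1-u)} = (1-u)^{θ₁/θ₁₂} u^{θ₂/θ₁₂}`; integrating over `u` and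
substituting `u ↦ 1 - u` gives the Beta integral.
-/

open MeasureTheory ProbabilityTheory Real Filter Set Topology

lemma max_add_max_eq_add_iff {α : Type*} [AddCommGroup α] [LinearOrder α] [IsOrderedAddMonoid α]
    {a b x y : α} : max a x + max b y = x + y ↔ a ≤ x ∧ b ≤ y := by
  constructor
  · intro h
    constructor
    · by_contra! ha
      exact (add_lt_add_of_lt_of_le (lt_max_of_lt_left ha) (le_max_right b y)).ne' h
    · by_contra! hb
      exact (add_lt_add_of_le_of_lt (le_max_right a x) (lt_max_of_lt_left hb)).ne' h
  · rintro ⟨ha, hb⟩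
    rw [max_eq_right ha, max_eq_right hb]

section Survival

variable {Ω : Type*} [MeasurableSpace Ω] {μ : Measure Ω} {T : Ω → ℝ}

lemma measure_le_eq_of_measure_lt {g : ℝ → ENNReal} {c : ℝ}
    (hg : Tendsto g (𝓝[<] c) (𝓝 (g c))) (hT : ∀ t, μ {ω | t < T ω} = g t) :
    μ {ω | c ≤ T ω} = g c := by
  refine le_antisymm (ge_of_tendsto hg ?_) ?_
  · filter_upwards [self_mem_nhdsWithin] with t (ht : t < c)
    exact hT t ▸ measure_mono fun ω (hω : c ≤ T ω) => ht.trans_le hω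
  · exact hT c ▸ measure_mono fun ω (hω : c < T ω) => hω.le

variable [IsProbabilityMeasure μ] {θ : ℝ}
  (hT : ∀ t : ℝ, 0 ≤ t → μ {ω | T ω > t} = ENNReal.ofReal (exp (-θ * t)))
include hT

-- The survival function extended by `1` to `t < 0` is continuous, also at `0`.
lemma measure_lt_eq_ofReal_exp_max (t : ℝ) :
    μ {ω | t < T ω} = ENNReal.ofReal (exp (-θ * max t 0)) := by
  rcases le_total 0 t with ht | ht
  · rw [max_eq_left ht]
    exact hT t ht
  · rw [max_eq_right ht, mul_zero, exp_zero, ENNReal.ofReal_one]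
    refine le_antisymm prob_le_one ?_
    calc (1 : ENNReal) = μ {ω | T ω > 0} := by simp [hT 0 le_rfl]
      _ ≤ μ {ω | t < T ω} := measure_mono fun ω (hω : 0 < T ω) => ht.trans_lt hω

lemma measure_le_eq_ofReal_exp {c : ℝ} (hc : 0 ≤ c) :
    μ {ω | c ≤ T ω} = ENNReal.ofReal (exp (-θ * c)) := by
  have hcont : Continuous fun t : ℝ => ENNReal.ofReal (exp (-θ * max t 0)) :=
    ENNReal.continuous_ofReal.comp (by fun_prop)
  simpa [max_eq_left hc] using
    measure_le_eq_of_measure_lt (c := c) hcont.continuousAt.continuousWithinAt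
      (measure_lt_eq_ofReal_exp_max hT)

end Survival

noncomputable def expQuantile (θ u : ℝ) : ℝ := -log (1 - u) / θ

section Quantile

variable {θ u : ℝ}

@[fun_prop]
lemma measurable_expQuantile : Measurable (expQuantile θ) := by
  unfold expQuantile
  fun_prop

lemma expQuantile_nonneg (hθ : 0 ≤ θ) (hu0 : 0 ≤ u) (hu1 : u < 1) : 0 ≤ expQuantile θ u :=
  div_nonneg (neg_nonneg.2 (log_nonpos (by linarith) (by linarith))) hθ

lemma exp_neg_mul_expQuantile_eq_rpow (θ' : ℝ) (hu : u < 1) :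
    exp (-θ' * expQuantile θ u) = (1 - u) ^ (θ' / θ) := by
  rw [rpow_def_of_pos (by linarith), expQuantile]
  ring_nf

lemma exp_neg_mul_expQuantile (hθ : θ ≠ 0) (hu : u < 1) : exp (-θ * expQuantile θ u) = 1 - u := by
  rw [exp_neg_mul_expQuantile_eq_rpow θ hu, div_self hθ, rpow_one]

lemma expQuantile_le_iff (hθ : 0 < θ) (hu : u < 1) {t : ℝ} :
    expQuantile θ u ≤ t ↔ exp (-θ * t) ≤ 1 - u := by
  rw [← exp_neg_mul_expQuantile hθ.ne' hu, exp_le_exp, neg_mul, neg_mul, neg_le_neg_iff,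
    mul_le_mul_iff_right₀ hθ]

lemma exp_neg_mul_min_add_eq_one_iff (hθ : 0 < θ) (hu : u ∈ Ioo 0 1) (t₁ t₂ : ℝ) :
    exp (-θ * min t₁ (expQuantile θ u)) + exp (-θ * min t₂ (expQuantile θ (1 - u))) = 1 ↔
      expQuantile θ u ≤ t₁ ∧ expQuantile θ (1 - u) ≤ t₂ := by
  have hanti : Antitone fun t => exp (-θ * t) := fun a b hab => exp_le_exp.2 (by nlinarith)
  have hu' : 1 - u < 1 := by linarith [hu.1]
  rw [hanti.map_min, hanti.map_min, exp_neg_mul_expQuantile hθ.ne' hu.2,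
    exp_neg_mul_expQuantile hθ.ne' hu', expQuantile_le_iff hθ hu.2, expQuantile_le_iff hθ hu',
    sub_sub_cancel]
  simpa only [sub_add_cancel] using max_add_max_eq_add_iff (x := 1 - u) (y := u)

lemma measure_expQuantile_le_eq_rpow {Ω : Type*} [MeasurableSpace Ω] {μ : Measure Ω}
    [IsProbabilityMeasure μ] {θ' : ℝ} {T : Ω → ℝ}
    (hT : ∀ t : ℝ, 0 ≤ t → μ {ω | T ω > t} = ENNReal.ofReal (exp (-θ' * t)))
    (hθ : 0 ≤ θ) (hu0 : 0 ≤ u) (hu1 : u < 1) :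
    μ {ω | expQuantile θ u ≤ T ω} = ENNReal.ofReal ((1 - u) ^ (θ' / θ)) := by
  rw [measure_le_eq_ofReal_exp hT (expQuantile_nonneg hθ hu0 hu1),
    exp_neg_mul_expQuantile_eq_rpow θ' hu1]

end Quantile

lemma measure_le_and_le_eq_lintegral {Ω : Type*} [MeasurableSpace Ω] {μ : Measure Ω}
    [IsFiniteMeasure μ] {X Y Z : Ω → ℝ} (hX : Measurable X) (hY : Measurable Y)
    (hZ : Measurable Z) (hind : iIndepFun ![X, Y, Z] μ) {f g : ℝ → ℝ}
    (hf : Measurable f) (hg : Measurable g) :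
    μ {ω | f (Z ω) ≤ X ω ∧ g (Z ω) ≤ Y ω} =
      ∫⁻ z, μ {ω | f z ≤ X ω} * μ {ω | g z ≤ Y ω} ∂(μ.map Z) := by
  have hm : ∀ i, Measurable (![X, Y, Z] i) := fun i => by fin_cases i <;> assumption
  have hXY : μ.map (fun ω => (X ω, Y ω)) = (μ.map X).prod (μ.map Y) :=
    (indepFun_iff_map_prod_eq_prod_map_map hX.aemeasurable hY.aemeasurable).1
      (by simpa using hind.indepFun (show (0 : Fin 3) ≠ 1 by decide))
  have hZXY : μ.map (fun ω => (Z ω, X ω, Y ω)) = (μ.map Z).prod ((μ.map X).prod (μ.map Y)) := by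
    rw [← hXY]
    exact (indepFun_iff_map_prod_eq_prod_map_map hZ.aemeasurable
      (hX.prodMk hY).aemeasurable).1
      (by simpa using (hind.indepFun_prodMk hm 0 1 2 (by decide) (by decide)).symm)
  let C : Set (ℝ × ℝ × ℝ) := {p | f p.1 ≤ p.2.1 ∧ g p.1 ≤ p.2.2}
  have hC : MeasurableSet C :=
    (measurableSet_le (hf.comp measurable_fst) measurable_snd.fst).inter
      (measurableSet_le (hg.comp measurable_fst) measurable_snd.snd)
  change μ ((fun ω => (Z ω, X ω, Y ω)) ⁻¹' C) = _
  rw [← Measure.map_apply (hZ.prodMk (hX.prodMk hY)) hC, hZXY, Measure.prod_apply hC]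
  refine lintegral_congr fun z => ?_
  change ((μ.map X).prod (μ.map Y)) (Ici (f z) ×ˢ Ici (g z)) = _
  rw [Measure.prod_prod, Measure.map_apply hX measurableSet_Ici,
    Measure.map_apply hY measurableSet_Ici]
  rfl

lemma lintegral_Ioo_ofReal_rpow_mul_rpow {a b : ℝ} (ha : 0 ≤ a) (hb : 0 ≤ b) :
    ∫⁻ u in Ioo (0 : ℝ) 1, ENNReal.ofReal ((1 - u) ^ a * u ^ b) =
      ENNReal.ofReal (∫ u in (0 : ℝ)..1, u ^ a * (1 - u) ^ b) := by
  have hcont : Continuous fun u : ℝ => (1 - u) ^ a * u ^ b :=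
    ((continuous_rpow_const ha).comp (continuous_const.sub continuous_id)).mul
      (continuous_rpow_const hb)
  have hnonneg : 0 ≤ᵐ[volume.restrict (Ioo (0 : ℝ) 1)] fun u => (1 - u) ^ a * u ^ b :=
    (ae_restrict_mem measurableSet_Ioo).mono fun u hu =>
      mul_nonneg (rpow_nonneg (sub_nonneg.2 hu.2.le) _) (rpow_nonneg hu.1.le _)
  rw [← ofReal_integral_eq_lintegral_ofReal
    (hcont.integrableOn_Icc.mono_set Ioo_subset_Icc_self) hnonneg,
    ← integral_Ioc_eq_integral_Ioo, ← intervalIntegral.integral_of_le zero_le_one]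
  congr 1
  simpa using (intervalIntegral.integral_comp_sub_left
    (fun u : ℝ => u ^ a * (1 - u) ^ b) (1 : ℝ) (a := 0) (b := 1))

/-- The probability of the singular part of the BNMO model equals the Beta integral
`∫₀¹ u^{θ₁/θ₁₂}(1−u)^{θ₂/θ₁₂} du = B(θ₁/θ₁₂+1, θ₂/θ₁₂+1)`. -/
theorem bnmo_singular_probability
    {Ω : Type*} [MeasureSpace Ω] [IsProbabilityMeasure (ℙ : Measure Ω)]
    (θ1 θ2 θ12 : ℝ) (hθ1 : 0 < θ1) (hθ2 : 0 < θ2) (hθ12 : 0 < θ12)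
    (T1 T2 U : Ω → ℝ)
    (hT1m : Measurable T1) (hT2m : Measurable T2) (hUm : Measurable U)
    (hindep : iIndepFun ![T1, T2, U] ℙ)
    (hT1 : ∀ t : ℝ, 0 ≤ t → ℙ {ω | T1 ω > t} = ENNReal.ofReal (exp (-θ1 * t)))
    (hT2 : ∀ t : ℝ, 0 ≤ t → ℙ {ω | T2 ω > t} = ENNReal.ofReal (exp (-θ2 * t)))
    (hU : Measure.map U ℙ = volume.restrict (Set.Ioo (0 : ℝ) 1))
    (Q : ℝ → ℝ) (hQ : ∀ u : ℝ, Q u = -Real.log (1 - u) / θ12)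
    (R S : Ω → ℝ)
    (hR : ∀ ω, R ω = min (T1 ω) (Q (U ω)))
    (hS : ∀ ω, S ω = min (T2 ω) (Q (1 - U ω))) :
    ℙ {ω | exp (-θ12 * R ω) + exp (-θ12 * S ω) = 1} =
      ENNReal.ofReal (∫ u in (0 : ℝ)..1, u ^ (θ1 / θ12) * (1 - u) ^ (θ2 / θ12)) := by
  obtain rfl : Q = expQuantile θ12 := funext hQ
  obtain rfl : R = _ := funext hR
  obtain rfl : S = _ := funext hS
  have hU01 : ∀ᵐ ω ∂ℙ, U ω ∈ Ioo 0 1 :=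
    ae_of_ae_map hUm.aemeasurable (hU ▸ ae_restrict_mem measurableSet_Ioo)
  have hsingular : ℙ {ω | exp (-θ12 * min (T1 ω) (expQuantile θ12 (U ω))) +
        exp (-θ12 * min (T2 ω) (expQuantile θ12 (1 - U ω))) = 1} =
      ℙ {ω | expQuantile θ12 (U ω) ≤ T1 ω ∧ expQuantile θ12 (1 - U ω) ≤ T2 ω} :=
    measure_congr <| hU01.mono fun ω hω =>
      propext (exp_neg_mul_min_add_eq_one_iff hθ12 hω (T1 ω) (T2 ω))
  rw [hsingular, measure_le_and_le_eq_lintegral hT1m hT2m hUm hindep measurable_expQuantile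
    (g := fun u => expQuantile θ12 (1 - u)) (by fun_prop), hU,
    ← lintegral_Ioo_ofReal_rpow_mul_rpow (div_pos hθ1 hθ12).le (div_pos hθ2 hθ12).le]
  refine setLIntegral_congr_fun measurableSet_Ioo fun u hu => ?_
  rw [measure_expQuantile_le_eq_rpow hT1 hθ12.le hu.1.le hu.2,
    measure_expQuantile_le_eq_rpow hT2 hθ12.le (by linarith [hu.2]) (by linarith [hu.1]),
    sub_sub_cancel, ENNReal.ofReal_mul (rpow_nonneg (by linarith [hu.2]) _)]
end

section
/- Let θ > 0 and let T₁, T₂, U be independent random variables on a probability space, where P(Tᵢ > t) = exp(−θ t) for all t ≥ 0 (i = 1, 2) and U is uniformly distributed on (0,1). With Q(u) = −ln(1−u)/θ, R = min(T₁, Q(U)) and S = min(T₂, Q(1−U)), one has P(exp(−θ R) + exp(−θ S) = 1) = 1/6. -/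
/-!
With `e t = exp (-θ t)`, the quantile `Q` inverts `t ↦ 1 - e t`, so
`exp (-θ R) = max (e T₁) (1 - U)` and `exp (-θ S) = max (e T₂) U`. The sum of these two maxima
is at least `(1 - U) + U = 1`, with equality exactly when `e T₁ ≤ 1 - U` and `e T₂ ≤ U`; ties
have probability zero since `U` has no atoms. The variables `e T₁`, `e T₂`, `U` are independent
and uniform on `(0, 1)`, so the probability is `∫₀¹ (1 - u) u du = 1/6`.
-/
open MeasureTheory ProbabilityTheory Real

theorem max_add_max_eq_one_iff {a b u : ℝ} :
    max a (1 - u) + max b u = 1 ↔ a ≤ 1 - u ∧ b ≤ u := by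
  constructor
  · intro h
    constructor <;> linarith [le_max_left a (1 - u), le_max_right a (1 - u),
      le_max_left b u, le_max_right b u]
  · rintro ⟨ha, hb⟩
    rw [max_eq_right ha, max_eq_right hb]
    ring

theorem exp_neg_mul_min {θ : ℝ} (hθ : 0 ≤ θ) (x y : ℝ) :
    exp (-θ * min x y) = max (exp (-θ * x)) (exp (-θ * y)) :=
  Antitone.map_min fun _ _ h => exp_le_exp.2 (by nlinarith)

theorem exp_neg_mul_neg_log_div {θ x : ℝ} (hθ : θ ≠ 0) (hx : 0 < x) :
    exp (-θ * (-log x / θ)) = x := by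
  rw [show -θ * (-log x / θ) = log x by field_simp, exp_log hx]

theorem lintegral_Ioo_one_sub_mul_self :
    ∫⁻ u in Set.Ioo (0 : ℝ) 1, ENNReal.ofReal (1 - u) * ENNReal.ofReal u = 1 / 6 := by
  have hint : ∫ u in (0 : ℝ)..1, (1 - u) * u = 1 / 6 := by
    simp_rw [sub_mul, one_mul, ← sq]
    rw [intervalIntegral.integral_sub intervalIntegral.intervalIntegrable_id
      (intervalIntegral.intervalIntegrable_pow 2), integral_id, integral_pow]
    norm_num
  have hnonneg : ∀ u ∈ Set.Ioo (0 : ℝ) 1, 0 ≤ (1 - u) * u := fun u hu =>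
    mul_nonneg (sub_nonneg.2 hu.2.le) hu.1.le
  rw [setLIntegral_congr_fun measurableSet_Ioo fun u hu =>
      (ENNReal.ofReal_mul (sub_nonneg.2 hu.2.le)).symm,
    ← ofReal_integral_eq_lintegral_ofReal, ← integral_Ioc_eq_integral_Ioo,
    ← intervalIntegral.integral_of_le zero_le_one, hint, ENNReal.ofReal_div_of_pos (by norm_num)]
  · simp
  · exact (continuous_const.sub continuous_id |>.mul continuous_id).integrableOn_Icc.mono_set
      Set.Ioo_subset_Icc_self
  · exact (ae_restrict_iff' measurableSet_Ioo).2 (ae_of_all _ hnonneg)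

section Probability

variable {Ω : Type*} [MeasurableSpace Ω] {μ : Measure Ω}

theorem ProbabilityTheory.IndepFun.ae_ne {α : Type*} [MeasurableSpace α] [MeasurableEq α]
    [IsFiniteMeasure μ] {X Y : Ω → α} (h : IndepFun X Y μ) (hX : Measurable X) (hY : Measurable Y)
    [NullSingletonClass (μ.map Y)] : ∀ᵐ ω ∂μ, X ω ≠ Y ω := by
  have hlaw := (indepFun_iff_map_prod_eq_prod_map_map hX.aemeasurable hY.aemeasurable).1 h
  rw [ae_iff]
  simp only [ne_eq, not_not]
  change μ ((fun ω => (X ω, Y ω)) ⁻¹' Set.diagonal α) = 0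
  rw [← Measure.map_apply (hX.prodMk hY) measurableSet_diagonal, hlaw,
    Measure.prod_apply measurableSet_diagonal]
  have hslice : ∀ x : α, Prod.mk x ⁻¹' Set.diagonal α = {x} := fun x => by
    ext; simp [eq_comm]
  simp [hslice]

theorem measure_exp_neg_mul_lt {T : Ω → ℝ} {θ : ℝ} (hθ : 0 < θ)
    (hT : ∀ t : ℝ, 0 ≤ t → μ {ω | T ω > t} = ENNReal.ofReal (exp (-θ * t)))
    {s : ℝ} (hs : s ∈ Set.Ioo 0 1) : μ {ω | exp (-θ * T ω) < s} = ENNReal.ofReal s := by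
  have hlog : 0 ≤ -log s / θ := div_nonneg (neg_nonneg.2 (log_nonpos hs.1.le hs.2.le)) hθ.le
  have hset : {ω | exp (-θ * T ω) < s} = {ω | T ω > -log s / θ} := by
    ext ω
    rw [Set.mem_ofPred_eq, Set.mem_ofPred_eq, ← lt_log_iff_exp_lt hs.1, gt_iff_lt, div_lt_iff₀ hθ]
    constructor <;> intro h <;> linarith
  rw [hset, hT _ hlog, exp_neg_mul_neg_log_div hθ.ne' hs.1]

theorem measure_lt_one_sub_and_lt_of_uniform [IsProbabilityMeasure μ] {A B V : Ω → ℝ}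
    (hAm : Measurable A) (hBm : Measurable B) (hVm : Measurable V)
    (hind : iIndepFun ![A, B, V] μ)
    (hA : ∀ s ∈ Set.Ioo (0 : ℝ) 1, μ {ω | A ω < s} = ENNReal.ofReal s)
    (hB : ∀ s ∈ Set.Ioo (0 : ℝ) 1, μ {ω | B ω < s} = ENNReal.ofReal s)
    (hV : μ.map V = volume.restrict (Set.Ioo 0 1)) :
    μ {ω | A ω < 1 - V ω ∧ B ω < V ω} = 1 / 6 := by
  have hm : ∀ i, Measurable (![A, B, V] i) := fun i => by fin_cases i <;> assumption
  have hAB : μ.map (fun ω => (A ω, B ω)) = (μ.map A).prod (μ.map B) :=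
    (indepFun_iff_map_prod_eq_prod_map_map hAm.aemeasurable hBm.aemeasurable).1
      (hind.indepFun (show (0 : Fin 3) ≠ 1 by decide))
  have hlaw : μ.map (fun ω => (V ω, (A ω, B ω))) =
      (volume.restrict (Set.Ioo 0 1)).prod ((μ.map A).prod (μ.map B)) := by
    rw [(indepFun_iff_map_prod_eq_prod_map_map hVm.aemeasurable
      (hAm.prodMk hBm).aemeasurable).1 (hind.indepFun_prodMk hm 0 1 2 (by decide) (by decide)).symm,
      hV, hAB]
  let E : Set (ℝ × ℝ × ℝ) := {p | p.2.1 < 1 - p.1 ∧ p.2.2 < p.1}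
  have hE : MeasurableSet E :=
    (measurableSet_lt measurable_snd.fst (measurable_const.sub measurable_fst)).inter
      (measurableSet_lt measurable_snd.snd measurable_fst)
  have hslice : ∀ u, Prod.mk u ⁻¹' E = Set.Iio (1 - u) ×ˢ Set.Iio u := fun u => rfl
  calc μ {ω | A ω < 1 - V ω ∧ B ω < V ω}
      = ∫⁻ u in Set.Ioo 0 1, μ.map A (Set.Iio (1 - u)) * μ.map B (Set.Iio u) := by
        change μ ((fun ω => (V ω, (A ω, B ω))) ⁻¹' E) = _
        rw [← Measure.map_apply (hVm.prodMk (hAm.prodMk hBm)) hE, hlaw, Measure.prod_apply hE]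
        simp only [hslice, Measure.prod_prod]
    _ = ∫⁻ u in Set.Ioo (0 : ℝ) 1, ENNReal.ofReal (1 - u) * ENNReal.ofReal u := by
        refine setLIntegral_congr_fun measurableSet_Ioo fun u hu => ?_
        rw [Measure.map_apply hAm measurableSet_Iio, Measure.map_apply hBm measurableSet_Iio]
        exact congr_arg₂ _ (hA _ ⟨by linarith [hu.2], by linarith [hu.1]⟩) (hB u hu)
    _ = 1 / 6 := lintegral_Ioo_one_sub_mul_self

end Probability

/-- In the symmetric case `θ₁ = θ₂ = θ₁₂ = θ`, the probability of the singular
part of the BNMO model equals `1/6`. -/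
theorem bnmo_singular_probability_symmetric
    {Ω : Type*} [MeasureSpace Ω] [IsProbabilityMeasure (ℙ : Measure Ω)]
    (θ : ℝ) (hθ : 0 < θ)
    (T1 T2 U : Ω → ℝ)
    (hT1m : Measurable T1) (hT2m : Measurable T2) (hUm : Measurable U)
    (hindep : iIndepFun ![T1, T2, U] ℙ)
    (hT1 : ∀ t : ℝ, 0 ≤ t → ℙ {ω | T1 ω > t} = ENNReal.ofReal (exp (-θ * t)))
    (hT2 : ∀ t : ℝ, 0 ≤ t → ℙ {ω | T2 ω > t} = ENNReal.ofReal (exp (-θ * t)))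
    (hU : Measure.map U ℙ = volume.restrict (Set.Ioo (0 : ℝ) 1))
    (Q : ℝ → ℝ) (hQ : ∀ u : ℝ, Q u = -Real.log (1 - u) / θ)
    (R S : Ω → ℝ)
    (hR : ∀ ω, R ω = min (T1 ω) (Q (U ω)))
    (hS : ∀ ω, S ω = min (T2 ω) (Q (1 - U ω))) :
    ℙ {ω | exp (-θ * R ω) + exp (-θ * S ω) = 1} = 1 / 6 := by
  set e : ℝ → ℝ := fun t => exp (-θ * t)
  have he : Measurable e := by fun_prop
  have hind : iIndepFun ![e ∘ T1, e ∘ T2, U] ℙ := by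
    convert hindep.comp ![e, e, id]
      (fun i => by fin_cases i <;> first | exact he | exact measurable_id) using 1
    funext i
    fin_cases i <;> rfl
  have hU01 : ∀ᵐ ω ∂ℙ, U ω ∈ Set.Ioo 0 1 :=
    ae_of_ae_map hUm.aemeasurable (hU ▸ ae_restrict_mem measurableSet_Ioo)
  have : NullSingletonClass (Measure.map U ℙ) := by rw [hU]; infer_instance
  have hAU : ∀ᵐ ω ∂ℙ, 1 - e (T1 ω) ≠ U ω :=
    IndepFun.ae_ne (Y := U) ((hind.indepFun (show (0 : Fin 3) ≠ 2 by decide)).comp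
      (measurable_const.sub measurable_id) measurable_id) (by fun_prop) hUm
  have hBU : ∀ᵐ ω ∂ℙ, e (T2 ω) ≠ U ω :=
    IndepFun.ae_ne (Y := U) (hind.indepFun (show (1 : Fin 3) ≠ 2 by decide)) (by fun_prop) hUm
  have hRe : ∀ ω, U ω < 1 → exp (-θ * R ω) = max (e (T1 ω)) (1 - U ω) := fun ω h => by
    rw [hR, exp_neg_mul_min hθ.le, hQ, exp_neg_mul_neg_log_div hθ.ne' (sub_pos.2 h)]
  have hSe : ∀ ω, 0 < U ω → exp (-θ * S ω) = max (e (T2 ω)) (U ω) := fun ω h => by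
    rw [hS, exp_neg_mul_min hθ.le, hQ, sub_sub_cancel, exp_neg_mul_neg_log_div hθ.ne' h]
  calc ℙ {ω | exp (-θ * R ω) + exp (-θ * S ω) = 1}
      = ℙ {ω | e (T1 ω) < 1 - U ω ∧ e (T2 ω) < U ω} := by
        refine measure_congr (Filter.eventuallyEq_set.2 ?_)
        filter_upwards [hU01, hAU, hBU] with ω hω hA hB
        rw [hRe ω hω.2, hSe ω hω.1, max_add_max_eq_one_iff, lt_iff_le_and_ne, lt_iff_le_and_ne]
        grind
    _ = 1 / 6 := measure_lt_one_sub_and_lt_of_uniform (he.comp hT1m) (he.comp hT2m) hUm hind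
        (fun _ hs => measure_exp_neg_mul_lt hθ hT1 hs)
        (fun _ hs => measure_exp_neg_mul_lt hθ hT2 hs) hU
end

section
/- Let θ₁, θ₂, θ₁₂ > 0. On the open region D = {(r,s) : r, s > 0, exp(−θ₁₂ r) + exp(−θ₁₂ s) > 1}, the mixed second partial derivative of (r,s) ↦ ln(exp(−θ₁ r − θ₂ s)(exp(−θ₁₂ r) + exp(−θ₁₂ s) − 1)) with respect to r and s equals −θ₁₂² exp(−θ₁₂ r − θ₁₂ s) / (exp(−θ₁₂ r) + exp(−θ₁₂ s) − 1)², which is nonpositive. -/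
/-!
In the variable `r` the logarithm splits as `-θ₁ r - θ₂ s + ln D(r, s)` with
`D = e^{-θ₁₂ r} + e^{-θ₁₂ s} - 1`, so `∂_r ln F̄ = -θ₁ - θ₁₂ e^{-θ₁₂ r} / D`. Only `D` still
depends on `s`, and differentiating the quotient gives `-θ₁₂² e^{-θ₁₂ r} e^{-θ₁₂ s} / D²`,
which is nonpositive because the numerator is. The region `D > 0` is open, so the formula for
`∂_r ln F̄` holds on a neighbourhood of `s`, which is what differentiating it in `s` requires.
-/

open Real Filter

lemma hasDerivAt_exp_const_mul (a x : ℝ) :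
    HasDerivAt (fun y => exp (a * y)) (a * exp (a * x)) x := by
  simpa [mul_comm] using ((hasDerivAt_id x).const_mul a).exp

lemma hasDerivAt_log_exp_mul {u v : ℝ → ℝ} {u' v' x : ℝ} (hu : HasDerivAt u u' x)
    (hv : HasDerivAt v v' x) (hx : v x ≠ 0) :
    HasDerivAt (fun y => log (exp (u y) * v y)) (u' + v' / v x) x := by
  convert (hu.exp.mul hv).log (mul_ne_zero (exp_pos _).ne' hx) using 1
  · rfl
  · simp only [Pi.mul_apply]
    field_simp

section BNMO

variable (θ1 θ2 θ12 : ℝ)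

lemma deriv_log_bnmo_survival_fst {r s : ℝ} (h : 1 < exp (-θ12 * r) + exp (-θ12 * s)) :
    deriv (fun r' : ℝ =>
        log (exp (-θ1 * r' - θ2 * s) * (exp (-θ12 * r') + exp (-θ12 * s) - 1))) r =
      -θ1 + -θ12 * exp (-θ12 * r) / (exp (-θ12 * r) + exp (-θ12 * s) - 1) := by
  have hu : HasDerivAt (fun r' : ℝ => -θ1 * r' - θ2 * s) (-θ1) r := by
    simpa using ((hasDerivAt_id r).const_mul (-θ1)).sub_const (θ2 * s)
  have hv := ((hasDerivAt_exp_const_mul (-θ12) r).add_const (exp (-θ12 * s))).sub_const 1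
  exact (hasDerivAt_log_exp_mul hu hv (by linarith)).deriv

lemma hasDerivAt_deriv_log_bnmo_survival_fst {r s : ℝ}
    (h : 1 < exp (-θ12 * r) + exp (-θ12 * s)) :
    HasDerivAt (fun s' : ℝ => deriv (fun r' : ℝ =>
        log (exp (-θ1 * r' - θ2 * s') * (exp (-θ12 * r') + exp (-θ12 * s') - 1))) r)
      (-θ12 ^ 2 * exp (-θ12 * r - θ12 * s) / (exp (-θ12 * r) + exp (-θ12 * s) - 1) ^ 2) s := by
  have hregion : ∀ᶠ s' in nhds s, 1 < exp (-θ12 * r) + exp (-θ12 * s') :=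
    (isOpen_lt continuous_const (by fun_prop)).mem_nhds h
  have hD := ((hasDerivAt_exp_const_mul (-θ12) s).const_add (exp (-θ12 * r))).sub_const 1
  have hquot := ((hasDerivAt_const s (-θ12 * exp (-θ12 * r))).div hD (by linarith)).const_add (-θ1)
  refine (hquot.congr_of_eventuallyEq ?_).congr_deriv ?_
  · filter_upwards [hregion] with s' hs'
    exact deriv_log_bnmo_survival_fst θ1 θ2 θ12 hs'
  · rw [show -θ12 * r - θ12 * s = -θ12 * r + -θ12 * s by ring, exp_add]
    ring

end BNMO

theorem bnmo_log_mixed_partial_general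
    (θ1 θ2 θ12 : ℝ) :
    ∀ r s : ℝ, 0 < r → 0 < s → 1 < exp (-θ12 * r) + exp (-θ12 * s) →
      deriv (fun s' : ℝ => deriv (fun r' : ℝ =>
          Real.log (exp (-θ1 * r' - θ2 * s') *
            (exp (-θ12 * r') + exp (-θ12 * s') - 1))) r) s =
        -θ12 ^ 2 * exp (-θ12 * r - θ12 * s) /
          (exp (-θ12 * r) + exp (-θ12 * s) - 1) ^ 2 ∧
      -θ12 ^ 2 * exp (-θ12 * r - θ12 * s) /
          (exp (-θ12 * r) + exp (-θ12 * s) - 1) ^ 2 ≤ 0 := by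
  intro r s _ _ h
  refine ⟨(hasDerivAt_deriv_log_bnmo_survival_fst θ1 θ2 θ12 h).deriv, ?_⟩
  exact div_nonpos_of_nonpos_of_nonneg
    (mul_nonpos_of_nonpos_of_nonneg (neg_nonpos.2 (sq_nonneg θ12)) (exp_pos _).le)
    (sq_nonneg _)

/-- On the region `exp(−θ₁₂r)+exp(−θ₁₂s) > 1`, the mixed second partial derivative
of `ln F̄` equals `−θ₁₂² e^{−θ₁₂r−θ₁₂s}/(e^{−θ₁₂r}+e^{−θ₁₂s}−1)²`, which is
nonpositive (the RCSD criterion). -/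
theorem bnmo_log_mixed_partial
    (θ1 θ2 θ12 : ℝ) (hθ1 : 0 < θ1) (hθ2 : 0 < θ2) (hθ12 : 0 < θ12) :
    ∀ r s : ℝ, 0 < r → 0 < s → 1 < exp (-θ12 * r) + exp (-θ12 * s) →
      deriv (fun s' : ℝ => deriv (fun r' : ℝ =>
          Real.log (exp (-θ1 * r' - θ2 * s') *
            (exp (-θ12 * r') + exp (-θ12 * s') - 1))) r) s =
        -θ12 ^ 2 * exp (-θ12 * r - θ12 * s) /
          (exp (-θ12 * r) + exp (-θ12 * s) - 1) ^ 2 ∧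
      -θ12 ^ 2 * exp (-θ12 * r - θ12 * s) /
          (exp (-θ12 * r) + exp (-θ12 * s) - 1) ^ 2 ≤ 0 :=
  bnmo_log_mixed_partial_general θ1 θ2 θ12
end
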